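/- Let p ≥ 5 be prime and let c : Z_p → {R,Y,G,B} be a surjective rainbow Sidon free coloring such that: R is dominant, R is not 2-dominant, Y is 2-dominant, and the pattern YRB appears. Then the pattern YY does not appear: there is no x ∈ Z_p with c(x) = c(x+1) = Y. -/

import Mathlib

/-- `c` admits a rainbow solution to the Sidon equation `x₁ + x₂ = x₃ + x₄`:
a solution whose four colors are pairwise distinct. -/
def HasRainbowSidon {n : ℕ} {α : Type*} (c : ZMod n → α) : Prop :=
  ∃ x₁ x₂ x₃ x₄ : ZMod n, x₁ + x₂ = x₃ + x₄ ∧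
    c x₁ ≠ c x₂ ∧ c x₁ ≠ c x₃ ∧ c x₁ ≠ c x₄ ∧
    c x₂ ≠ c x₃ ∧ c x₂ ≠ c x₄ ∧ c x₃ ≠ c x₄

/-- The rainbow number `rb(ℤ_n, S)` of `ℤ_n` for the Sidon equation: the least `r > 0`
such that every exact (surjective) `r`-coloring of `ℤ_n` admits a rainbow Sidon solution.
(When no such `r` exists, `r = n + 1` belongs to the set vacuously, matching the
convention `rb(ℤ_n, S) = n + 1`.) -/
noncomputable def rbSidon (n : ℕ) : ℕ :=
  sInf {r : ℕ | 0 < r ∧ ∀ c : ZMod n → Fin r, Function.Surjective c → HasRainbowSidon c}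

/-- The four colors used in Section 2. -/
inductive Color : Type
  | R | Y | G | B
deriving DecidableEq

/-!
If `R` is dominant and `Y` is `2`-dominant, a third colour on two adjacent cells spreads to all
of `ℤ_p`; so two adjacent cells avoiding `R` are both `Y`. Let `Y R B` sit at `j, j+1, j+2` and
let `g` have colour `G`. If `c z = Y`, then `z + g - (j+2)` cannot be `R`, otherwise
`z + g = (z + g - (j+2)) + (j+2)` is a rainbow solution with colours `Y, G, R, B`. Hence a pair
`Y Y` at `z` reproduces itself at `z + τ` with `τ = g - (j+2) ≠ 0`, and since `p` is prime these
translates cover all of `ℤ_p`, including the cell `j+1` of colour `R`.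
-/

def IsDominant {n : ℕ} {α : Type*} (c : ZMod n → α) (i : ZMod n) (X : α) : Prop :=
  ∀ x, c x = c (x + i) ∨ c x = X ∨ c (x + i) = X

theorem ZMod.forall_of_add_invariant {p : ℕ} [Fact p.Prime] {S : ZMod p → Prop} {τ : ZMod p}
    (hτ : τ ≠ 0) (hS : ∀ z, S z → S (z + τ)) {x : ZMod p} (hx : S x) (y : ZMod p) : S y := by
  have orbit : ∀ k : ℕ, S (x + k * τ) := by
    intro k
    induction k with
    | zero => simpa using hx
    | succ k ih => simpa [add_mul, add_assoc] using hS _ ih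
  have hk : x + (((y - x) * τ⁻¹).val : ZMod p) * τ = y := by
    rw [ZMod.natCast_val, ZMod.cast_id', id, mul_assoc, inv_mul_cancel₀ hτ, mul_one,
      add_sub_cancel]
  simpa only [hk] using orbit ((y - x) * τ⁻¹).val

theorem apply_add_sub_eq_of_not_hasRainbowSidon {n : ℕ} {α : Type*} {c : ZMod n → α}
    (hfree : ¬ HasRainbowSidon c) {x₁ x₂ x₄ : ZMod n} (h₁₂ : c x₁ ≠ c x₂) (h₁₄ : c x₁ ≠ c x₄)
    (h₂₄ : c x₂ ≠ c x₄) :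
    c (x₁ + x₂ - x₄) = c x₁ ∨ c (x₁ + x₂ - x₄) = c x₂ ∨ c (x₁ + x₂ - x₄) = c x₄ := by
  by_contra! h
  exact hfree ⟨x₁, x₂, x₁ + x₂ - x₄, x₄, by ring, h₁₂, h.1.symm, h₁₄, h.2.1.symm, h₂₄, h.2.2⟩

section Dominance

variable {n : ℕ} {α : Type*} {c : ZMod n → α} {R Y X : α}

theorem IsDominant.add_two_of_adjacent (hR : IsDominant c 1 R) (hY : IsDominant c 2 Y)
    (hRY : R ≠ Y) (hXR : X ≠ R) (hXY : X ≠ Y) {z : ZMod n} (h₀ : c z = X) (h₁ : c (z + 1) = X) :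
    c (z + 2) = X := by
  have hz : z + 1 + 1 = z + 2 := by ring
  rcases hR (z + 1) with h | h | h
  · rw [← hz, ← h, h₁]
  · exact absurd (h₁ ▸ h) hXR
  · rw [hz] at h
    rcases hY z with h' | h' | h'
    · exact absurd (h₀ ▸ h'.trans h) hXR
    · exact absurd (h₀ ▸ h') hXY
    · exact absurd (h.symm.trans h') hRY

theorem IsDominant.eq_of_adjacent [Fact n.Prime] (hR : IsDominant c 1 R)
    (hY : IsDominant c 2 Y) (hRY : R ≠ Y) (hXR : X ≠ R) (hXY : X ≠ Y) {z : ZMod n}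
    (h₀ : c z = X) (h₁ : c (z + 1) = X) (v : ZMod n) : c v = X := by
  refine (ZMod.forall_of_add_invariant (S := fun z ↦ c z = X ∧ c (z + 1) = X) one_ne_zero
    ?_ ⟨h₀, h₁⟩ v).1
  rintro z ⟨h₀, h₁⟩
  rw [add_assoc, one_add_one_eq_two]
  exact ⟨h₁, hR.add_two_of_adjacent hY hRY hXR hXY h₀ h₁⟩

theorem IsDominant.adjacent_eq_of_ne [Fact n.Prime] (hR : IsDominant c 1 R)
    (hY : IsDominant c 2 Y) (hRY : R ≠ Y) {r : ZMod n} (hr : c r = R) {u : ZMod n}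
    (h₀ : c u ≠ R) (h₁ : c (u + 1) ≠ R) : c u = Y ∧ c (u + 1) = Y := by
  have heq : c u = c (u + 1) := (hR u).resolve_right (not_or.2 ⟨h₀, h₁⟩)
  have hu : c u = Y := by
    by_contra hXY
    exact h₀ ((hR.eq_of_adjacent hY hRY h₀ hXY rfl heq.symm r).symm.trans hr)
  exact ⟨hu, heq ▸ hu⟩

end Dominance

theorem no_YY_general (p : ℕ) (hp : p.Prime)
    (c : ZMod p → Color) (hsurj : Function.Surjective c)
    (hfree : ¬ HasRainbowSidon c)
    (hRdom : ∀ x : ZMod p, c x = c (x + 1) ∨ c x = Color.R ∨ c (x + 1) = Color.R)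
    (hY2dom : ∀ x : ZMod p, c x = c (x + 2) ∨ c x = Color.Y ∨ c (x + 2) = Color.Y)
    (hYRB : ∃ j : ZMod p, c j = Color.Y ∧ c (j + 1) = Color.R ∧ c (j + 2) = Color.B)
    : ∀ x : ZMod p, ¬ (c x = Color.Y ∧ c (x + 1) = Color.Y) := by
  have : Fact p.Prime := ⟨hp⟩
  obtain ⟨j, -, hj1, hj2⟩ := hYRB
  obtain ⟨g, hg⟩ := hsurj Color.G
  have hτ : g - (j + 2) ≠ 0 := sub_ne_zero.2 fun h ↦ by simp [h, hj2] at hg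
  have not_R : ∀ z, c z = Color.Y → c (z + (g - (j + 2))) ≠ Color.R := by
    intro z hz hR
    rcases apply_add_sub_eq_of_not_hasRainbowSidon hfree (x₁ := z) (x₂ := g) (x₄ := j + 2)
      (by simp [hz, hg]) (by simp [hz, hj2]) (by simp [hg, hj2]) with h | h | h <;>
      simp [add_sub_assoc, hR, hz, hg, hj2] at h
  have translate : ∀ z, c z = Color.Y ∧ c (z + 1) = Color.Y →
      c (z + (g - (j + 2))) = Color.Y ∧ c (z + (g - (j + 2)) + 1) = Color.Y := by
    rintro z ⟨h₀, h₁⟩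
    refine IsDominant.adjacent_eq_of_ne hRdom hY2dom (by decide) hj1 (not_R z h₀) ?_
    rw [add_right_comm]
    exact not_R _ h₁
  intro x hx
  simpa [hj1] using (ZMod.forall_of_add_invariant hτ translate hx (j + 1)).1

theorem no_YY (p : ℕ) (hp : p.Prime) (hp5 : 5 ≤ p)
    (c : ZMod p → Color) (hsurj : Function.Surjective c)
    (hfree : ¬ HasRainbowSidon c)
    (hRdom : ∀ x : ZMod p, c x = c (x + 1) ∨ c x = Color.R ∨ c (x + 1) = Color.R)
    (hRnot2dom : ¬ ∀ x : ZMod p, c x = c (x + 2) ∨ c x = Color.R ∨ c (x + 2) = Color.R)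
    (hY2dom : ∀ x : ZMod p, c x = c (x + 2) ∨ c x = Color.Y ∨ c (x + 2) = Color.Y)
    (hYRB : ∃ j : ZMod p, c j = Color.Y ∧ c (j + 1) = Color.R ∧ c (j + 2) = Color.B)
    : ∀ x : ZMod p, ¬ (c x = Color.Y ∧ c (x + 1) = Color.Y) :=
  no_YY_general p hp c hsurj hfree hRdom hY2dom hYRB
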